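/- Let (A,d,⟨·,·⟩) be a cochain complex with pairing, B ⊆ A a subcomplex, and A = H ⊕ im d ⊕ C a Hodge decomposition relative to B, with associated special propagator P^A. Suppose π : A → A is a symmetric projection with image B which is a quasi-isomorphism. Then P := (id − π)∘P^A is a propagator with respect to π (i.e. id + d∘P + P∘d = π and ⟨Px,y⟩ = (−1)^{deg x}⟨x,Py⟩). If moreover π respects the Hodge decompositions of A and B, then P is special. -/

import Mathlib

noncomputable section

/-- A cochain complex over `ℝ` (with a `ℤ`-grading realized as an internal direct sum
of submodules) together with a graded-symmetric pairing of degree `n` compatible with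
the differential. -/
structure PairedComplex (A : Type*) [AddCommGroup A] [Module ℝ A] where
  /-- the grading `A = ⊕ᵢ Aⁱ` -/
  grading : ℤ → Submodule ℝ A
  internal : DirectSum.IsInternal grading
  /-- the differential -/
  d : A →ₗ[ℝ] A
  d_degree : ∀ i : ℤ, ∀ x ∈ grading i, d x ∈ grading (i + 1)
  d_sq : ∀ x : A, d (d x) = 0
  /-- the degree of the pairing -/
  n : ℤ
  /-- the pairing -/
  pair : A →ₗ[ℝ] A →ₗ[ℝ] ℝ
  pair_degree : ∀ i j : ℤ, i + j ≠ n → ∀ x ∈ grading i, ∀ y ∈ grading j, pair x y = 0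
  pair_symm : ∀ i j : ℤ, ∀ x ∈ grading i, ∀ y ∈ grading j,
      pair x y = (-1 : ℝ) ^ (i * j) * pair y x
  pair_d : ∀ i : ℤ, ∀ x ∈ grading i, ∀ y : A,
      pair (d x) y = (-1 : ℝ) ^ (1 + i) * pair x (d y)

namespace PairedComplex

variable {A : Type*} [AddCommGroup A] [Module ℝ A] (X : PairedComplex A)

/-- `f` is homogeneous of degree `k`. -/
def IsDegree (f : A →ₗ[ℝ] A) (k : ℤ) : Prop :=
  ∀ i : ℤ, ∀ x ∈ X.grading i, f x ∈ X.grading (i + k)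

/-- A chain map: a degree `0` map commuting with the differential. -/
def IsChainMap (f : A →ₗ[ℝ] A) : Prop :=
  X.IsDegree f 0 ∧ ∀ x : A, f (X.d x) = X.d (f x)

/-- A projection: an idempotent chain map. -/
def IsProjection (p : A →ₗ[ℝ] A) : Prop :=
  X.IsChainMap p ∧ ∀ x : A, p (p x) = p x

/-- The projection `π_P = id + d∘P + P∘d` associated to a homotopy operator `P`. -/
def assocProj (P : A →ₗ[ℝ] A) : A →ₗ[ℝ] A :=
  LinearMap.id + X.d ∘ₗ P + P ∘ₗ X.d

/-- A homotopy operator: a degree `-1` map such that `−d∘P − P∘d` is a projection. -/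
def IsHomotopyOperator (P : A →ₗ[ℝ] A) : Prop :=
  X.IsDegree P (-1) ∧ X.IsProjection (-(X.d ∘ₗ P) - P ∘ₗ X.d)

/-- A homotopy operator `P` is special if `P∘P = 0` and `P∘d∘P = −P`. -/
def IsSpecial (P : A →ₗ[ℝ] A) : Prop :=
  (∀ x : A, P (P x) = 0) ∧ ∀ x : A, P (X.d (P x)) = -(P x)

/-- The symmetry property `⟨Px,y⟩ = (−1)^{deg x} ⟨x,Py⟩` of a propagator. -/
def IsSymmetricDeg (P : A →ₗ[ℝ] A) : Prop :=
  ∀ i : ℤ, ∀ x ∈ X.grading i, ∀ y : A,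
    X.pair (P x) y = (-1 : ℝ) ^ i * X.pair x (P y)

/-- A propagator: a homotopy operator satisfying the symmetry property. -/
def IsPropagator (P : A →ₗ[ℝ] A) : Prop :=
  X.IsHomotopyOperator P ∧ X.IsSymmetricDeg P

/-- A symmetric operator: `⟨px,y⟩ = ⟨x,py⟩`. -/
def IsSymmetric (p : A →ₗ[ℝ] A) : Prop :=
  ∀ x y : A, X.pair (p x) y = X.pair x (p y)

/-- Nondegeneracy of the pairing. -/
def Nondegenerate : Prop :=
  ∀ x : A, (∀ y : A, X.pair x y = 0) → x = 0

/-- The pairing is perfect: the musical map `x ↦ ⟨x,·⟩` is an isomorphism onto the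
graded dual, i.e. it is injective and every linear functional on `A^{n-i}` is
represented by an element of `A^i`. -/
def Perfect : Prop :=
  X.Nondegenerate ∧
    ∀ i : ℤ, ∀ φ : ↥(X.grading (X.n - i)) →ₗ[ℝ] ℝ,
      ∃ x ∈ X.grading i, ∀ y : ↥(X.grading (X.n - i)), X.pair x (y : A) = φ y

/-- A chain map induces an isomorphism on cohomology (elementwise formulation). -/
def IsQuasiIso (f : A →ₗ[ℝ] A) : Prop :=
  (∀ x : A, X.d x = 0 → ∃ y : A, X.d y = 0 ∧ ∃ z : A, f y - x = X.d z) ∧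
  (∀ y : A, X.d y = 0 → (∃ z : A, f y = X.d z) → ∃ w : A, y = X.d w)

/-- A graded subspace: spanned by its homogeneous elements. -/
def IsGradedSubspace (B : Submodule ℝ A) : Prop :=
  ∀ x ∈ B, x ∈ ⨆ i : ℤ, B ⊓ X.grading i

/-- A subcomplex: a graded subspace preserved by the differential. -/
def IsSubcomplex (B : Submodule ℝ A) : Prop :=
  X.IsGradedSubspace B ∧ ∀ x ∈ B, X.d x ∈ B

/-- The inclusion `B ↪ A` is a quasi-isomorphism (elementwise formulation). -/
def InclQuasiIso (B : Submodule ℝ A) : Prop :=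
  (∀ x : A, X.d x = 0 → ∃ b ∈ B, X.d b = 0 ∧ ∃ z : A, x - b = X.d z) ∧
  (∀ b ∈ B, X.d b = 0 → (∃ z : A, b = X.d z) → ∃ c ∈ B, b = X.d c)

/-- The restriction of the pairing to `B` is perfect. -/
def SubPerfect (B : Submodule ℝ A) : Prop :=
  (∀ x ∈ B, (∀ y ∈ B, X.pair x y = 0) → x = 0) ∧
    ∀ i : ℤ, ∀ φ : ↥(B ⊓ X.grading (X.n - i)) →ₗ[ℝ] ℝ,
      ∃ x ∈ B ⊓ X.grading i, ∀ y : ↥(B ⊓ X.grading (X.n - i)), X.pair x (y : A) = φ y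

/-- The orthogonal complement `B^⊥ = {x | ⟨x,b⟩ = 0 ∀ b ∈ B}`. -/
def perp (B : Submodule ℝ A) : Submodule ℝ A where
  carrier := {x : A | ∀ b ∈ B, X.pair x b = 0}
  add_mem' := by
    intro x y hx hy
    intro b hb
    have hx' := hx b hb
    have hy' := hy b hb
    simp only [map_add, LinearMap.add_apply, hx', hy', add_zero]
  zero_mem' := by
    intro b hb
    simp
  smul_mem' := by
    intro c x hx b hb
    have hx' := hx b hb
    simp only [map_smul, LinearMap.smul_apply, hx', smul_zero]

/-- A harmonic subspace: a graded subspace `H` with `ker d = H ⊕ im d`. -/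
def IsHarmonic (H : Submodule ℝ A) : Prop :=
  X.IsGradedSubspace H ∧ H ≤ LinearMap.ker X.d ∧
    H ⊓ LinearMap.range X.d = ⊥ ∧ H ⊔ LinearMap.range X.d = LinearMap.ker X.d

/-- A Hodge decomposition `B = H ⊕ d(B) ⊕ C` of a subcomplex `B ⊆ A` (with respect to
the restricted pairing); taking `B = ⊤` gives a Hodge decomposition of `A`. -/
def IsHodgeOn (B H C : Submodule ℝ A) : Prop :=
  H ≤ B ∧ C ≤ B ∧ X.IsGradedSubspace H ∧ X.IsGradedSubspace C ∧
  H ≤ LinearMap.ker X.d ∧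
  H ⊓ Submodule.map X.d B = ⊥ ∧
  H ⊔ Submodule.map X.d B = LinearMap.ker X.d ⊓ B ∧
  C ⊓ LinearMap.ker X.d = ⊥ ∧
  C ⊔ (LinearMap.ker X.d ⊓ B) = B ∧
  (∀ c ∈ C, ∀ c' ∈ C, X.pair c c' = 0) ∧
  (∀ c ∈ C, ∀ h ∈ H, X.pair c h = 0)

/-- A Hodge decomposition `A = H ⊕ im d ⊕ C` of the full complex. -/
def IsHodge (H C : Submodule ℝ A) : Prop :=
  X.IsHodgeOn ⊤ H C

/-- `A` is of Hodge type if it admits a Hodge decomposition. -/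
def IsHodgeType : Prop :=
  ∃ H C : Submodule ℝ A, X.IsHodge H C

/-- The operator `P_{H,C}` canonically associated to a Hodge decomposition `(H,C)`:
`P(dy) = −y` for `y ∈ C`, and `P = 0` on `H ⊕ C`. -/
def IsHodgeOperator (H C : Submodule ℝ A) (P : A →ₗ[ℝ] A) : Prop :=
  (∀ y ∈ C, P (X.d y) = -y) ∧ (∀ x ∈ H, P x = 0) ∧ ∀ x ∈ C, P x = 0

/-- The degenerate subspace `A_deg = {a | ⟨a,x⟩ = 0 ∀ x}`. -/
def degSub : Submodule ℝ A := X.perp ⊤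

/-- The induced pairing on cohomology is nondegenerate (elementwise formulation). -/
def CohomNondeg : Prop :=
  ∀ x : A, X.d x = 0 → (∀ y : A, X.d y = 0 → X.pair x y = 0) → ∃ z : A, x = X.d z

/-- The induced pairing on cohomology is perfect (elementwise formulation). -/
def CohomPerfect : Prop :=
  X.CohomNondeg ∧
    ∀ i : ℤ, ∀ φ : ↥(LinearMap.ker X.d ⊓ X.grading (X.n - i)) →ₗ[ℝ] ℝ,
      (∀ y : ↥(LinearMap.ker X.d ⊓ X.grading (X.n - i)),
          (∃ z : A, (y : A) = X.d z) → φ y = 0) →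
      ∃ x ∈ LinearMap.ker X.d ⊓ X.grading i,
        ∀ y : ↥(LinearMap.ker X.d ⊓ X.grading (X.n - i)), X.pair x (y : A) = φ y

end PairedComplex

namespace PairedComplex

variable {A : Type*} [AddCommGroup A] [Module ℝ A] (X : PairedComplex A)

/-- A realization of the nondegenerate quotient `Q(A) = A / A_deg`:
a surjective chain map with kernel `A_deg` preserving pairings, gradings and degree. -/
def IsQuotientMap {B : Type*} [AddCommGroup B] [Module ℝ B]
    (Y : PairedComplex B) (q : A →ₗ[ℝ] B) : Prop :=
  Function.Surjective q ∧
  LinearMap.ker q = X.degSub ∧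
  (∀ x : A, q (X.d x) = Y.d (q x)) ∧
  (∀ x y : A, Y.pair (q x) (q y) = X.pair x y) ∧
  (∀ i : ℤ, ∀ x ∈ X.grading i, q x ∈ Y.grading i) ∧
  Y.n = X.n

/-- A Hodge star on a nonnegatively graded cochain complex with pairing of degree `n`:
a degree-reversing involution (up to sign) such that `(x,y) := ⟨x,⋆y⟩` is a positive
definite inner product. -/
def IsHodgeStar (star : A →ₗ[ℝ] A) : Prop :=
  (∀ i : ℤ, ∀ x ∈ X.grading i, star x ∈ X.grading (X.n - i)) ∧
  (∀ i : ℤ, ∀ x ∈ X.grading i, star (star x) = ((-1 : ℝ) ^ (i * (X.n - i))) • x) ∧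
  (∀ x y : A, X.pair x (star y) = X.pair y (star x)) ∧
  (∀ x : A, x ≠ 0 → 0 < X.pair x (star x))

end PairedComplex

/-- A differential graded algebra with pairing: a `PairedComplex` together with an
associative product of degree `0` satisfying the Leibniz rule and compatible with the
pairing. -/
structure PairedDGA (A : Type*) [AddCommGroup A] [Module ℝ A] extends
    PairedComplex A where
  /-- the product -/
  mul : A →ₗ[ℝ] A →ₗ[ℝ] A
  mul_degree : ∀ i j : ℤ, ∀ x ∈ grading i, ∀ y ∈ grading j, mul x y ∈ grading (i + j)
  mul_assoc' : ∀ x y z : A, mul (mul x y) z = mul x (mul y z)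
  leibniz : ∀ i : ℤ, ∀ x ∈ grading i, ∀ y : A,
      d (mul x y) = mul (d x) y + ((-1 : ℝ) ^ i) • mul x (d y)
  pair_mul : ∀ x y z : A, pair (mul x y) z = pair x (mul y z)

namespace PairedDGA

variable {A : Type*} [AddCommGroup A] [Module ℝ A] (Y : PairedDGA A)

/-- `one` is a unit for the product. -/
def IsUnit (one : A) : Prop :=
  one ≠ 0 ∧ one ∈ Y.grading 0 ∧ ∀ x : A, Y.mul one x = x ∧ Y.mul x one = x

/-- graded commutativity. -/
def IsCommutative : Prop :=
  ∀ i j : ℤ, ∀ x ∈ Y.grading i, ∀ y ∈ Y.grading j,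
    Y.mul x y = ((-1 : ℝ) ^ (i * j)) • Y.mul y x

/-- An orientation of degree `n` inducing the pairing: a chain-level functional
supported in degree `n`, vanishing on boundaries, nontrivial on cohomology,
with `⟨x,y⟩ = o(x∧y)`. -/
def IsOrientation (o : A →ₗ[ℝ] ℝ) : Prop :=
  (∀ i : ℤ, i ≠ Y.n → ∀ x ∈ Y.grading i, o x = 0) ∧
  (∀ x : A, o (Y.d x) = 0) ∧
  (∃ x : A, Y.d x = 0 ∧ o x ≠ 0) ∧
  (∀ x y : A, Y.pair x y = o (Y.mul x y))

/-- The small subalgebra `S_P`: the smallest graded dg-subalgebra containing the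
harmonic subspace `H_P = im π_P` and preserved by `P`. -/
def smallSub (P : A →ₗ[ℝ] A) : Submodule ℝ A :=
  sInf {S : Submodule ℝ A |
    LinearMap.range (Y.toPairedComplex.assocProj P) ≤ S ∧
    Y.toPairedComplex.IsGradedSubspace S ∧
    (∀ x ∈ S, Y.d x ∈ S) ∧
    (∀ x ∈ S, ∀ y ∈ S, Y.mul x y ∈ S) ∧
    (∀ x ∈ S, P x ∈ S)}

end PairedDGA

/-- Elements of `A` obtained from homogeneous elements of the harmonic subspace
`H_P = im π_P` by iterated applications of `P` and of the product. -/
inductive TreeGen {A : Type*} [AddCommGroup A] [Module ℝ A]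
    (Y : PairedDGA A) (P : A →ₗ[ℝ] A) : A → Prop
  | base : ∀ (i : ℤ) (x : A), x ∈ Y.grading i →
      x ∈ LinearMap.range (Y.toPairedComplex.assocProj P) → TreeGen Y P x
  | mul : ∀ x y : A, TreeGen Y P x → TreeGen Y P y → TreeGen Y P (Y.mul x y)
  | app : ∀ x : A, TreeGen Y P x → TreeGen Y P (P x)

/-!
Write `x = h + d c + c'` according to `A = H ⊕ im d ⊕ C`, so that `P^A x = -c` and
`P x = π c - c`. The quasi-isomorphism `π` forces `H ⊆ B`, so `π` fixes `h`, and
`id + d P + P d = π` is a direct computation. Using the symmetry of `π`, the graded symmetry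
of `P` reduces to the orthogonality `⟨π c, f⟩ = 0` for `c, f ∈ C`, which comes from
decomposing `π c` and `π f` along `B = (B ∩ H) ⊕ d B ⊕ (B ∩ C)`. If `π (C) ⊆ C`, then `P`
takes values in `C`, where `P^A` vanishes; this gives `P ∘ P = 0` and `P ∘ d ∘ P = -P`.
-/

namespace PairedComplex

variable {A : Type*} [AddCommGroup A] [Module ℝ A] (X : PairedComplex A)

def gradedProj (i : ℤ) : A →ₗ[ℝ] A :=
  (X.grading i).subtype ∘ₗ DirectSum.component ℝ ℤ (fun j => X.grading j) i ∘ₗ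
    (LinearEquiv.ofBijective (DirectSum.coeLinearMap X.grading) X.internal).symm.toLinearMap

lemma gradedProj_mem (i : ℤ) (x : A) : X.gradedProj i x ∈ X.grading i :=
  Submodule.coe_mem _

lemma gradedProj_of_mem {i : ℤ} {x : A} (hx : x ∈ X.grading i) : X.gradedProj i x = x := by
  change (((LinearEquiv.ofBijective (DirectSum.coeLinearMap X.grading) X.internal).symm x) i
    : A) = x
  rw [X.internal.ofBijective_coeLinearMap_of_mem hx]

lemma gradedProj_of_mem_ne {i j : ℤ} (hij : i ≠ j) {x : A} (hx : x ∈ X.grading i) :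
    X.gradedProj j x = 0 := by
  change (((LinearEquiv.ofBijective (DirectSum.coeLinearMap X.grading) X.internal).symm x) j
    : A) = 0
  rw [X.internal.ofBijective_coeLinearMap_of_mem_ne hij hx, ZeroMemClass.coe_zero]

@[elab_as_elim]
lemma induction_on_grading {motive : A → Prop} (x : A)
    (mem : ∀ i, ∀ y ∈ X.grading i, motive y) (zero : motive 0)
    (add : ∀ y z, motive y → motive z → motive (y + z)) : motive x :=
  Submodule.iSup_induction X.grading (motive := motive)
    (X.internal.submodule_iSup_eq_top ▸ Submodule.mem_top) mem zero add

lemma gradedProj_d (i : ℤ) (x : A) : X.gradedProj i (X.d x) = X.d (X.gradedProj (i - 1) x) := by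
  induction x using X.induction_on_grading with
  | mem j y hy =>
    by_cases hij : j + 1 = i
    · rw [X.gradedProj_of_mem (hij ▸ X.d_degree j y hy),
        X.gradedProj_of_mem (by rwa [← hij, add_sub_cancel_right])]
    · rw [X.gradedProj_of_mem_ne hij (X.d_degree j y hy),
        X.gradedProj_of_mem_ne (by omega) hy, map_zero]
  | zero => simp
  | add y z hy hz => simp only [map_add, hy, hz]

lemma isGradedSubspace_range_d : X.IsGradedSubspace (LinearMap.range X.d) := by
  rintro _ ⟨x, rfl⟩
  induction x using X.induction_on_grading with
  | mem j y hy =>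
    exact Submodule.mem_iSup_of_mem (j + 1) ⟨LinearMap.mem_range_self X.d y, X.d_degree j y hy⟩
  | zero => simp
  | add y z hy hz => simpa only [map_add] using add_mem hy hz

lemma perp_comm {S T : Submodule ℝ A} (hS : X.IsGradedSubspace S) (hT : X.IsGradedSubspace T)
    (hST : S ≤ X.perp T) : T ≤ X.perp S := by
  intro t ht
  refine (iSup_le fun j => ?_ : ⨆ j, T ⊓ X.grading j ≤ X.perp S) (hT t ht)
  rintro t ⟨htT, htj⟩ s hs
  refine (iSup_le fun i => ?_ : ⨆ i, S ⊓ X.grading i ≤ LinearMap.ker (X.pair t)) (hS s hs)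
  rintro s ⟨hsS, hsi⟩
  rw [LinearMap.mem_ker, X.pair_symm j i t htj s hsi, hST hsS t htT, mul_zero]

lemma pair_d_eq_zero_of_d_eq_zero {y : A} (hy : X.d y = 0) (x : A) : X.pair (X.d x) y = 0 := by
  induction x using X.induction_on_grading with
  | mem j z hz => rw [X.pair_d j z hz y, hy, map_zero, mul_zero]
  | zero => simp
  | add z w hz hw => rw [map_add, map_add, LinearMap.add_apply, hz, hw, add_zero]

lemma pair_d_of_mem {i : ℤ} {c : A} (hc : c ∈ X.grading (i - 1)) (y : A) :
    X.pair (X.d c) y = (-1 : ℝ) ^ i * X.pair c (X.d y) := by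
  rw [X.pair_d (i - 1) c hc y, add_sub_cancel]

variable {X}

lemma IsGradedSubspace.gradedProj_mem {S : Submodule ℝ A}
    (hS : X.IsGradedSubspace S) {x : A} (hx : x ∈ S) (i : ℤ) : X.gradedProj i x ∈ S := by
  refine (iSup_le fun j => ?_ : ⨆ j, S ⊓ X.grading j ≤ S.comap (X.gradedProj i)) (hS x hx)
  rintro y ⟨hyS, hyj⟩
  by_cases hij : j = i
  · subst hij
    rwa [Submodule.mem_comap, X.gradedProj_of_mem hyj]
  · rw [Submodule.mem_comap, X.gradedProj_of_mem_ne hij hyj]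
    exact S.zero_mem

lemma IsDegree.comp {f g : A →ₗ[ℝ] A} {k : ℤ} (hf : X.IsDegree f 0)
    (hg : X.IsDegree g k) : X.IsDegree (f ∘ₗ g) k := by
  intro i x hx
  simpa using hf _ _ (hg i x hx)

lemma IsProjection.apply_of_mem_range {π : A →ₗ[ℝ] A} (hπ : X.IsProjection π) {b : A}
    (hb : b ∈ LinearMap.range π) : π b = b := by
  obtain ⟨y, rfl⟩ := hb
  exact hπ.2 y

lemma IsProjection.id_sub {π : A →ₗ[ℝ] A} (hπ : X.IsProjection π) :
    X.IsProjection (LinearMap.id - π) := by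
  obtain ⟨⟨hdeg, hd⟩, hidem⟩ := hπ
  refine ⟨⟨fun i x hx => ?_, fun x => ?_⟩, fun x => ?_⟩
  · have := hdeg i x hx
    rw [add_zero] at this ⊢
    exact sub_mem hx this
  · simp [hd]
  · simp [hidem]

lemma IsSymmetric.pair_sub_apply {π : A →ₗ[ℝ] A} (hsym : X.IsSymmetric π) (x y : A) :
    X.pair (x - π x) y = X.pair x (y - π y) := by
  rw [map_sub, LinearMap.sub_apply, map_sub, hsym]

lemma isHomotopyOperator_of_assocProj_eq {P π : A →ₗ[ℝ] A} (hP : X.IsDegree P (-1))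
    (hπ : X.IsProjection π) (hPπ : X.assocProj P = π) : X.IsHomotopyOperator P := by
  refine ⟨hP, ?_⟩
  convert hπ.id_sub using 1
  rw [← hPπ, assocProj]
  abel

section Hodge

variable {B H C : Submodule ℝ A} {π PA : A →ₗ[ℝ] A}

lemma IsHodgeOn.exists_decomp (hHC : X.IsHodgeOn B H C) {x : A} (hx : x ∈ B) :
    ∃ h ∈ H, ∃ c ∈ C, ∃ c' ∈ C, x = h + X.d c + c' := by
  obtain ⟨-, -, -, -, -, -, hker, -, hB, -, -⟩ := hHC
  obtain ⟨c', hc', k, hk, rfl⟩ := Submodule.mem_sup.mp (hB ▸ hx)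
  obtain ⟨h, hh, _, ⟨b, hb, rfl⟩, rfl⟩ := Submodule.mem_sup.mp (hker ▸ hk : k ∈ H ⊔ B.map X.d)
  obtain ⟨c, hc, k', hk', rfl⟩ := Submodule.mem_sup.mp (hB ▸ hb)
  refine ⟨h, hh, c, hc, c', hc', ?_⟩
  rw [map_add, LinearMap.mem_ker.mp hk'.1, add_zero]
  abel

lemma IsHodge.exists_decomp (hHC : X.IsHodge H C) (x : A) :
    ∃ h ∈ H, ∃ c ∈ C, ∃ c' ∈ C, x = h + X.d c + c' :=
  IsHodgeOn.exists_decomp hHC Submodule.mem_top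

lemma IsHodge.exists_decomp_of_mem_grading (hHC : X.IsHodge H C) {i : ℤ} {x : A}
    (hx : x ∈ X.grading i) :
    ∃ h ∈ H, ∃ c ∈ C ⊓ X.grading (i - 1), ∃ c' ∈ C, x = h + X.d c + c' := by
  obtain ⟨h, hh, c, hc, c', hc', rfl⟩ := IsHodge.exists_decomp hHC x
  obtain ⟨-, -, hHgr, hCgr, -⟩ := hHC
  refine ⟨_, hHgr.gradedProj_mem hh i, _, ⟨hCgr.gradedProj_mem hc (i - 1),
    X.gradedProj_mem _ c⟩, _, hCgr.gradedProj_mem hc' i, ?_⟩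
  rw [← X.gradedProj_d, ← map_add, ← map_add, X.gradedProj_of_mem hx]

lemma IsHodge.le_perp_range_d (hHC : X.IsHodge H C) : H ≤ X.perp (LinearMap.range X.d) := by
  obtain ⟨-, -, hHgr, -, hHker, -⟩ := hHC
  refine X.perp_comm X.isGradedSubspace_range_d hHgr ?_
  rintro _ ⟨x, rfl⟩ h hh
  exact X.pair_d_eq_zero_of_d_eq_zero (hHker hh) x

lemma IsHodgeOperator.apply_decomp (hPA : X.IsHodgeOperator H C PA) {h c c' : A} (hh : h ∈ H)
    (hc : c ∈ C) (hc' : c' ∈ C) : PA (h + X.d c + c') = -c := by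
  rw [map_add, map_add, hPA.1 c hc, hPA.2.1 h hh, hPA.2.2 c' hc', zero_add, add_zero]

lemma IsHodgeOperator.apply_mem (hPA : X.IsHodgeOperator H C PA) (hHC : X.IsHodge H C) (x : A) :
    PA x ∈ C := by
  obtain ⟨h, hh, c, hc, c', hc', rfl⟩ := IsHodge.exists_decomp hHC x
  rw [hPA.apply_decomp hh hc hc']
  exact neg_mem hc

lemma IsHodgeOperator.isDegree (hPA : X.IsHodgeOperator H C PA) (hHC : X.IsHodge H C) :
    X.IsDegree PA (-1) := by
  intro i x hx
  obtain ⟨h, hh, c, ⟨hc, hci⟩, c', hc', rfl⟩ := hHC.exists_decomp_of_mem_grading hx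
  rw [hPA.apply_decomp hh hc hc', ← sub_eq_add_neg]
  exact neg_mem hci

lemma le_range_of_isQuasiIso (hHC : X.IsHodge H C)
    (hrel : X.IsHodgeOn (LinearMap.range π) (LinearMap.range π ⊓ H) (LinearMap.range π ⊓ C))
    (hπ : X.IsChainMap π) (hqi : X.IsQuasiIso π) : H ≤ LinearMap.range π := by
  obtain ⟨-, -, -, -, hHker, hHd, -⟩ := hHC
  obtain ⟨-, -, -, -, -, -, hBker, -⟩ := hrel
  intro h hh
  obtain ⟨y, hy, z, hz⟩ := hqi.1 h (hHker hh)
  have hπy : π y ∈ LinearMap.ker X.d ⊓ LinearMap.range π :=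
    ⟨LinearMap.mem_ker.mpr (by rw [← hπ.2, hy, map_zero]), LinearMap.mem_range_self π y⟩
  rw [← hBker] at hπy
  obtain ⟨h', hh', _, ⟨b, -, rfl⟩, hsum⟩ := Submodule.mem_sup.mp hπy
  have hdiff : h - h' ∈ H ⊓ Submodule.map X.d ⊤ :=
    ⟨sub_mem hh hh'.2, b - z, trivial, by rw [map_sub, ← hz, ← hsum]; abel⟩
  rw [hHd, Submodule.mem_bot, sub_eq_zero] at hdiff
  exact hdiff ▸ hh'.1

lemma pair_apply_eq_zero_of_mem_complement (hHC : X.IsHodge H C)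
    (hrel : X.IsHodgeOn (LinearMap.range π) (LinearMap.range π ⊓ H) (LinearMap.range π ⊓ C))
    (hπ : X.IsProjection π) (hsym : X.IsSymmetric π) {c f : A} (hc : c ∈ C) (hf : f ∈ C) :
    X.pair (π c) f = 0 := by
  obtain ⟨-, -, -, -, -, -, -, -, -, hCC, hCH⟩ := id hHC
  obtain ⟨h₁, hh₁, c₁, -, g₁, hg₁, e₁⟩ := hrel.exists_decomp (LinearMap.mem_range_self π c)
  obtain ⟨h₂, hh₂, c₂, hc₂, g₂, hg₂, e₂⟩ := hrel.exists_decomp (LinearMap.mem_range_self π f)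
  have hg₁c₂ : X.pair g₁ (X.d c₂) = 0 := by
    have : X.pair g₁ (π f) = 0 := by
      rw [← hsym, hπ.apply_of_mem_range hg₁.1, hCC g₁ hg₁.2 f hf]
    rwa [e₂, map_add, map_add, hCH g₁ hg₁.2 h₂ hh₂.2, hCC g₁ hg₁.2 g₂ hg₂.2, zero_add,
      add_zero] at this
  have hcc₂ : X.pair c (X.d c₂) = 0 := by
    have hdc₂ : π (X.d c₂) = X.d c₂ := by rw [hπ.1.2, hπ.apply_of_mem_range hc₂.1]
    rw [← hdc₂, ← hsym, e₁, map_add, map_add, LinearMap.add_apply, LinearMap.add_apply,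
      hHC.le_perp_range_d hh₁.2 _ (LinearMap.mem_range_self X.d c₂),
      X.pair_d_eq_zero_of_d_eq_zero (X.d_sq c₂), hg₁c₂, add_zero, add_zero]
  rw [hsym, e₂, map_add, map_add, hCH c hc h₂ hh₂.2, hcc₂, hCC c hc g₂ hg₂.2, add_zero, add_zero]

lemma assocProj_sub_comp (hHC : X.IsHodge H C) (hPA : X.IsHodgeOperator H C PA)
    (hπ : X.IsProjection π) (hH : H ≤ LinearMap.range π) :
    X.assocProj ((LinearMap.id - π) ∘ₗ PA) = π := by
  ext x
  obtain ⟨h, hh, c, hc, c', hc', rfl⟩ := IsHodge.exists_decomp hHC x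
  obtain ⟨-, -, -, -, hHker, -⟩ := hHC
  have hdx : X.d (h + X.d c + c') = X.d c' := by
    rw [map_add, map_add, LinearMap.mem_ker.mp (hHker hh), X.d_sq, zero_add, zero_add]
  simp only [assocProj, LinearMap.add_apply, LinearMap.comp_apply, LinearMap.sub_apply,
    LinearMap.id_apply]
  rw [hdx, hPA.apply_decomp hh hc hc', hPA.1 c' hc']
  simp only [map_add, map_neg, map_sub, hπ.1.2, hπ.apply_of_mem_range (hH hh)]
  abel

lemma isSymmetricDeg_sub_comp (hHC : X.IsHodge H C)
    (hrel : X.IsHodgeOn (LinearMap.range π) (LinearMap.range π ⊓ H) (LinearMap.range π ⊓ C))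
    (hPA : X.IsHodgeOperator H C PA) (hπ : X.IsProjection π) (hsym : X.IsSymmetric π)
    (hH : H ≤ LinearMap.range π) : X.IsSymmetricDeg ((LinearMap.id - π) ∘ₗ PA) := by
  obtain ⟨-, -, -, -, -, -, -, -, -, hCiso, -⟩ := id hHC
  have hCC : ∀ c ∈ C, ∀ f ∈ C, X.pair (c - π c) f = 0 := fun c hc f hf => by
    rw [map_sub, LinearMap.sub_apply, hCiso c hc f hf,
      pair_apply_eq_zero_of_mem_complement hHC hrel hπ hsym hc hf, sub_zero]
  have hπH : ∀ h ∈ H, h - π h = 0 := fun h hh => by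
    rw [hπ.apply_of_mem_range (hH hh), sub_self]
  intro i x hx y
  obtain ⟨h, hh, c, ⟨hc, hci⟩, c', hc', rfl⟩ := hHC.exists_decomp_of_mem_grading hx
  obtain ⟨k, hk, e, he, e', he', rfl⟩ := IsHodge.exists_decomp hHC y
  have hL : X.pair (c - π c) (k + X.d e + e') = X.pair c (X.d (e - π e)) := by
    rw [map_add, map_add, hsym.pair_sub_apply c k, hπH k hk, hsym.pair_sub_apply c (X.d e),
      hCC c hc e' he', hπ.1.2, ← map_sub, map_zero, zero_add, add_zero]
  have hR : X.pair (h + X.d c + c') (e - π e) = (-1 : ℝ) ^ i * X.pair c (X.d (e - π e)) := by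
    rw [map_add, map_add, LinearMap.add_apply, LinearMap.add_apply, ← hsym.pair_sub_apply h e,
      hπH h hh, ← hsym.pair_sub_apply c' e, hCC c' hc' e he, X.pair_d_of_mem hci, map_zero,
      LinearMap.zero_apply, zero_add, add_zero]
  simp only [LinearMap.comp_apply, LinearMap.sub_apply, LinearMap.id_apply,
    hPA.apply_decomp hh hc hc', hPA.apply_decomp hk he he', map_neg, LinearMap.neg_apply,
    hL, hR]
  rw [mul_neg, ← mul_assoc, ← mul_zpow, neg_one_mul, neg_neg, one_zpow, one_mul]

lemma isSpecial_sub_comp (hHC : X.IsHodge H C) (hPA : X.IsHodgeOperator H C PA)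
    (hidem : ∀ x, π (π x) = π x) (hπC : ∀ c ∈ C, π c ∈ C) :
    X.IsSpecial ((LinearMap.id - π) ∘ₗ PA) := by
  set P := (LinearMap.id - π) ∘ₗ PA
  have hP : ∀ x, P x = PA x - π (PA x) := fun x => rfl
  have hPC : ∀ x, P x ∈ C := fun x =>
    sub_mem (hPA.apply_mem hHC x) (hπC _ (hPA.apply_mem hHC x))
  have hπP : ∀ x, π (P x) = 0 := fun x => by rw [hP, map_sub, hidem, sub_self]
  refine ⟨fun x => ?_, fun x => ?_⟩
  · rw [hP (P x), hPA.2.2 _ (hPC x), map_zero, sub_zero]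
  · rw [hP (X.d (P x)), hPA.1 _ (hPC x), map_neg, hπP, neg_zero, sub_zero]

end Hodge

end PairedComplex

section Statements

variable {A B : Type*} [AddCommGroup A] [Module ℝ A] [AddCommGroup B] [Module ℝ B]
theorem stmt15_general (X : PairedComplex A) (Bsub : Submodule ℝ A)
    (H C : Submodule ℝ A) (hHC : X.IsHodge H C)
    (hrel : X.IsHodgeOn Bsub (Bsub ⊓ H) (Bsub ⊓ C))
    (PA : A →ₗ[ℝ] A) (hPA : X.IsHodgeOperator H C PA)
    (π : A →ₗ[ℝ] A) (hπ : X.IsProjection π) (hsym : X.IsSymmetric π)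
    (hrange : LinearMap.range π = Bsub) (hqi : X.IsQuasiIso π)
    (P : A →ₗ[ℝ] A) (hP : P = (LinearMap.id - π) ∘ₗ PA) :
    (X.IsPropagator P ∧ X.assocProj P = π) ∧
    ((∀ h ∈ H, π h ∈ Bsub ⊓ H) → (∀ c ∈ C, π c ∈ Bsub ⊓ C) → X.IsSpecial P) := by
  subst hP hrange
  have hH : H ≤ LinearMap.range π := PairedComplex.le_range_of_isQuasiIso hHC hrel hπ.1 hqi
  have hassoc := PairedComplex.assocProj_sub_comp hHC hPA hπ hH
  refine ⟨⟨⟨?_, PairedComplex.isSymmetricDeg_sub_comp hHC hrel hPA hπ hsym hH⟩, hassoc⟩, ?_⟩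
  · exact PairedComplex.isHomotopyOperator_of_assocProj_eq
      (hπ.id_sub.1.1.comp (hPA.isDegree hHC)) hπ hassoc
  · exact fun _ hπC => PairedComplex.isSpecial_sub_comp hHC hPA hπ.2 fun c hc => (hπC c hc).2

/-- `(id − π)∘P^A` is a propagator with respect to a symmetric
quasi-isomorphic projection `π` onto a subcomplex `B`, for a Hodge decomposition
relative to `B`; it is special when `π` respects the decompositions. -/
theorem stmt15 (X : PairedComplex A) (Bsub : Submodule ℝ A) (hB : X.IsSubcomplex Bsub)
    (H C : Submodule ℝ A) (hHC : X.IsHodge H C)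
    (hrel : X.IsHodgeOn Bsub (Bsub ⊓ H) (Bsub ⊓ C))
    (PA : A →ₗ[ℝ] A) (hPA : X.IsHodgeOperator H C PA)
    (π : A →ₗ[ℝ] A) (hπ : X.IsProjection π) (hsym : X.IsSymmetric π)
    (hrange : LinearMap.range π = Bsub) (hqi : X.IsQuasiIso π)
    (P : A →ₗ[ℝ] A) (hP : P = (LinearMap.id - π) ∘ₗ PA) :
    (X.IsPropagator P ∧ X.assocProj P = π) ∧
    ((∀ h ∈ H, π h ∈ Bsub ⊓ H) → (∀ c ∈ C, π c ∈ Bsub ⊓ C) → X.IsSpecial P) :=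
  stmt15_general X Bsub H C hHC hrel PA hPA π hπ hsym hrange hqi P hP

end Statements
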